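/- Let α: H ⊗ A → A and ω: H ⊗ H → A be maps making A a twisted partial H-module algebra, and suppose ω is trivial, i.e. h·(l·1_A) = ω(h,l) = Σ (h₍₁₎·1_A)(h₍₂₎l·1_A) for all h,l ∈ H. Then α is a partial action of H on A, i.e. h·(l·a) = Σ (h₍₁₎·1_A)(h₍₂₎l·a) for all h,l ∈ H, a ∈ A. -/

import Mathlib

open TensorProduct

noncomputable section

/-- A twisted partial action `(α, ω)` of a Hopf algebra `H` on a unital
algebra `A` (Definition 2.1 of Alves–Batista–Dokuchaev–Paques).  Sweedler sums
are expressed by quantifying over arbitrary finite representations of the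
comultiplication. -/
structure TwistedPartialAction (k H A : Type) [CommRing k]
    [Ring H] [HopfAlgebra k H] [Ring A] [Algebra k A] where
  act : H →ₗ[k] A →ₗ[k] A
  cocycle : H →ₗ[k] H →ₗ[k] A
  /-- `1_H · a = a` -/
  act_one : ∀ a : A, act 1 a = a
  /-- `h · (ab) = Σ (h₁ · a)(h₂ · b)` -/
  act_mul : ∀ (h : H) (a b : A) (ι : Type) (s : Finset ι) (h1 h2 : ι → H),
    Coalgebra.comul (R := k) h = ∑ i ∈ s, h1 i ⊗ₜ[k] h2 i →
    act h (a * b) = ∑ i ∈ s, act (h1 i) a * act (h2 i) b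
  /-- `Σ (h₁ · (l₁ · a)) ω(h₂, l₂) = Σ ω(h₁, l₁)(h₂ l₂ · a)` -/
  twisted : ∀ (h l : H) (a : A) (ι κ : Type) (s : Finset ι) (t : Finset κ)
    (h1 h2 : ι → H) (l1 l2 : κ → H),
    Coalgebra.comul (R := k) h = ∑ i ∈ s, h1 i ⊗ₜ[k] h2 i →
    Coalgebra.comul (R := k) l = ∑ j ∈ t, l1 j ⊗ₜ[k] l2 j →
    ∑ i ∈ s, ∑ j ∈ t, act (h1 i) (act (l1 j) a) * cocycle (h2 i) (l2 j) =
      ∑ i ∈ s, ∑ j ∈ t, cocycle (h1 i) (l1 j) * act (h2 i * l2 j) a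
  /-- `ω(h,l) = Σ ω(h₁, l₁)(h₂ l₂ · 1)` -/
  cocycle_absorb : ∀ (h l : H) (ι κ : Type) (s : Finset ι) (t : Finset κ)
    (h1 h2 : ι → H) (l1 l2 : κ → H),
    Coalgebra.comul (R := k) h = ∑ i ∈ s, h1 i ⊗ₜ[k] h2 i →
    Coalgebra.comul (R := k) l = ∑ j ∈ t, l1 j ⊗ₜ[k] l2 j →
    cocycle h l = ∑ i ∈ s, ∑ j ∈ t, cocycle (h1 i) (l1 j) * act (h2 i * l2 j) 1

/-! Expanding `l·a = Σ (l₁·a)(l₂·1)` and using `h₂·(l₂·1) = ω(h₂,l₂)`, the twisting axiom turns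
`h·(l·a)` into `Σ ω(h₁,l₁)(h₂l₂·a)`. Substituting `ω(h₁,l₁) = Σ (h₁·1)(h₂l₁·1)` and regrouping by
coassociativity leaves `Σ (h₁·1) Σ (h₂l₁·1)(h₃l₂·a)`, and the inner sum is `(h₂l)·(1·a)` because
the comultiplication is multiplicative. -/

namespace Coalgebra

variable {R C M : Type*} [CommSemiring R] [AddCommMonoid C] [Module R C] [Coalgebra R C]
  [AddCommMonoid M] [Module R M]

theorem sum_sum_apply_tmul_eq_sum_apply_comul {c : C} {ι : Type*} {κ : ι → Type*}
    (rep : Repr R c ι) (rep₁ : ∀ i, Repr R (rep.left i) (κ i)) (Φ : C →ₗ[R] C ⊗[R] C →ₗ[R] M) :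
    ∑ i ∈ rep.index, ∑ j ∈ (rep₁ i).index, Φ ((rep₁ i).left j) ((rep₁ i).right j ⊗ₜ rep.right i) =
      ∑ i ∈ rep.index, Φ (rep.left i) (comul (rep.right i)) := by
  have := congrArg (TensorProduct.lift Φ) (coassoc_apply (R := R) c)
  simpa [← rep.eq, ← (rep₁ _).eq, TensorProduct.sum_tmul] using this

end Coalgebra

namespace TwistedPartialAction

variable {k H A : Type} [CommRing k] [Ring H] [HopfAlgebra k H] [Ring A] [Algebra k A]
  (P : TwistedPartialAction k H A)

def actMul (a b : A) : H ⊗[k] H →ₗ[k] A :=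
  LinearMap.mul' k A ∘ₗ TensorProduct.map (P.act.flip a) (P.act.flip b)

@[simp]
theorem actMul_tmul (a b : A) (x y : H) : P.actMul a b (x ⊗ₜ y) = P.act x a * P.act y b := rfl

theorem act_mul_eq_actMul_comul (h : H) (a b : A) :
    P.act h (a * b) = P.actMul a b (Coalgebra.comul h) := by
  obtain ⟨s, hs⟩ := TensorProduct.exists_finset (Coalgebra.comul (R := k) h)
  simp [P.act_mul h a b _ s _ _ hs, hs]

theorem actMul_comul_mul_comul (h l : H) (a : A) :
    P.actMul 1 a (Coalgebra.comul h * Coalgebra.comul l) = P.act (h * l) a := by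
  rw [← Bialgebra.comul_mul, ← act_mul_eq_actMul_comul, one_mul]

theorem act_act_eq_sum_cocycle_mul (htriv : ∀ h l : H, P.act h (P.act l 1) = P.cocycle h l)
    {h l : H} {ι κ : Type} (rh : Coalgebra.Repr k h ι) (rl : Coalgebra.Repr k l κ) (a : A) :
    P.act h (P.act l a) = ∑ i ∈ rh.index, ∑ j ∈ rl.index,
      P.cocycle (rh.left i) (rl.left j) * P.act (rh.right i * rl.right j) a := by
  have hla : P.act l a = ∑ j ∈ rl.index, P.act (rl.left j) a * P.act (rl.right j) 1 := by
    simpa using P.act_mul l a 1 κ rl.index rl.left rl.right rl.eq.symm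
  rw [← P.twisted h l a ι κ rh.index rl.index _ _ _ _ rh.eq.symm rl.eq.symm, Finset.sum_comm,
    hla, map_sum]
  refine Finset.sum_congr rfl fun j _ => ?_
  simp only [P.act_mul h _ _ ι rh.index rh.left rh.right rh.eq.symm, htriv]

theorem sum_cocycle_mul_act_eq
    (htriv : ∀ (h l : H) (ι : Type) (s : Finset ι) (h1 h2 : ι → H),
      Coalgebra.comul (R := k) h = ∑ i ∈ s, h1 i ⊗ₜ[k] h2 i →
      P.cocycle h l = ∑ i ∈ s, P.act (h1 i) 1 * P.act (h2 i * l) 1)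
    {h l : H} {ι κ : Type} (rh : Coalgebra.Repr k h ι) (rl : Coalgebra.Repr k l κ) (a : A) :
    ∑ i ∈ rh.index, ∑ j ∈ rl.index,
      P.cocycle (rh.left i) (rl.left j) * P.act (rh.right i * rl.right j) a =
      ∑ i ∈ rh.index, P.act (rh.left i) 1 * P.act (rh.right i * l) a := by
  let r₁ i := Coalgebra.Repr.arbitrary k (rh.left i)
  let Φ : H →ₗ[k] H ⊗[k] H →ₗ[k] A := (LinearMap.mul k A).compl₁₂ (P.act.flip 1)
    (P.actMul 1 a ∘ₗ LinearMap.mulRight k (Coalgebra.comul l))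
  have hΦ (x y z : H) : Φ x (y ⊗ₜ z) = P.act x 1 *
      ∑ j ∈ rl.index, P.act (y * rl.left j) 1 * P.act (z * rl.right j) a := by
    simp [Φ, ← rl.eq, Finset.mul_sum]
  calc _ = ∑ i ∈ rh.index, ∑ j ∈ rl.index, (∑ q ∈ (r₁ i).index,
          P.act ((r₁ i).left q) 1 * P.act ((r₁ i).right q * rl.left j) 1) *
            P.act (rh.right i * rl.right j) a := by
        simp only [htriv _ _ _ _ _ _ (r₁ _).eq.symm]
    _ = ∑ i ∈ rh.index, ∑ q ∈ (r₁ i).index, Φ ((r₁ i).left q) ((r₁ i).right q ⊗ₜ rh.right i) := by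
        simp only [hΦ, Finset.sum_mul, Finset.mul_sum, mul_assoc]
        exact Finset.sum_congr rfl fun i _ => Finset.sum_comm
    _ = ∑ i ∈ rh.index, Φ (rh.left i) (Coalgebra.comul (rh.right i)) :=
        Coalgebra.sum_sum_apply_tmul_eq_sum_apply_comul rh r₁ Φ
    _ = _ := by simp [Φ, actMul_comul_mul_comul]

end TwistedPartialAction

theorem trivialCocycle_partialAction
    {k H A : Type} [CommRing k] [Ring H] [HopfAlgebra k H]
    [Ring A] [Algebra k A] (P : TwistedPartialAction k H A)
    (htriv1 : ∀ h l : H, P.act h (P.act l 1) = P.cocycle h l)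
    (htriv2 : ∀ (h l : H) (ι : Type) (s : Finset ι) (h1 h2 : ι → H),
      Coalgebra.comul (R := k) h = ∑ i ∈ s, h1 i ⊗ₜ[k] h2 i →
      P.cocycle h l = ∑ i ∈ s, P.act (h1 i) 1 * P.act (h2 i * l) 1) :
    ∀ (h l : H) (a : A) (ι : Type) (s : Finset ι) (h1 h2 : ι → H),
      Coalgebra.comul (R := k) h = ∑ i ∈ s, h1 i ⊗ₜ[k] h2 i →
      P.act h (P.act l a) = ∑ i ∈ s, P.act (h1 i) 1 * P.act (h2 i * l) a := by
  intro h l a ι s h1 h2 hh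
  let rh : Coalgebra.Repr k h ι := ⟨s, h1, h2, hh.symm⟩
  rw [P.act_act_eq_sum_cocycle_mul htriv1 rh (Coalgebra.Repr.arbitrary k l) a]
  exact P.sum_cocycle_mul_act_eq htriv2 rh _ a
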